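/- (Proposition 1(i), case |Q| = |R| = 2.) Suppose Assumption 1 holds, i.e. P₁ > min(P₂·a₁, P₂·a₂) and P₂ > min(P₁·a₁, P₁·a₂). Then the 2×2 hospital game has no Nash equilibrium in which both players choose the same strategy: neither the profile (r₁, r₁) nor the profile (r₂, r₂) is a Nash equilibrium. -/

import Mathlib

/-- The two wards a hospital can choose to make excel. -/
inductive Ward : Type
  | r1 | r2
deriving DecidableEq

open Ward

/-- The size of the patient group associated with a ward. -/
def grp (P1 P2 : ℝ) : Ward → ℝ
  | r1 => P1
  | r2 => P2

/-- Payoff of hospital q₁ when q₁ chooses `s1` and q₂ chooses `s2`: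
if both choose the same ward, q₁ gets the fraction `a1` of that ward's group;
otherwise q₁ gets the full group of its chosen ward. -/
def pay1 (P1 P2 a1 : ℝ) (s1 s2 : Ward) : ℝ :=
  if s1 = s2 then grp P1 P2 s1 * a1 else grp P1 P2 s1

/-- Payoff of hospital q₂ when q₁ chooses `s1` and q₂ chooses `s2`:
if both choose the same ward, q₂ gets the fraction `a2` of that ward's group;
otherwise q₂ gets the full group of its chosen ward. -/
def pay2 (P1 P2 a2 : ℝ) (s1 s2 : Ward) : ℝ :=
  if s1 = s2 then grp P1 P2 s2 * a2 else grp P1 P2 s2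

/-- A strategy profile `(s1, s2)` is a Nash equilibrium if neither hospital can
strictly increase its payoff by unilaterally changing its strategy. -/
def IsNash (P1 P2 a1 a2 : ℝ) (s1 s2 : Ward) : Prop :=
  (∀ t1 : Ward, pay1 P1 P2 a1 t1 s2 ≤ pay1 P1 P2 a1 s1 s2) ∧
  (∀ t2 : Ward, pay2 P1 P2 a2 s1 t2 ≤ pay2 P1 P2 a2 s1 s2)

/-! At a profile where both hospitals pick the same ward `s`, hospital `qⱼ` earns `P_s · aⱼ`, while
deviating alone to the other ward `t` earns it the whole group `P_t`. So `(s, s)` can be an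
equilibrium only if `P_t ≤ min (P_s · a₁) (P_s · a₂)`, which is what Assumption 1 excludes. -/

theorem IsNash.grp_le_min_of_ne {P1 P2 a1 a2 : ℝ} {s t : Ward}
    (h : IsNash P1 P2 a1 a2 s s) (hts : t ≠ s) :
    grp P1 P2 t ≤ min (grp P1 P2 s * a1) (grp P1 P2 s * a2) := by
  obtain ⟨h1, h2⟩ := h
  refine le_min ?_ ?_
  · simpa only [pay1, hts, if_false, if_true] using h1 t
  · simpa only [pay2, hts.symm, if_false, if_true] using h2 t

theorem stmt3_general (P1 P2 a1 a2 : ℝ)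
    (hA1 : P1 > min (P2 * a1) (P2 * a2))
    (hA2 : P2 > min (P1 * a1) (P1 * a2)) :
    ¬ IsNash P1 P2 a1 a2 r1 r1 ∧ ¬ IsNash P1 P2 a1 a2 r2 r2 :=
  ⟨fun h => hA2.not_ge (h.grp_le_min_of_ne (t := r2) (by decide)),
    fun h => hA1.not_ge (h.grp_le_min_of_ne (t := r1) (by decide))⟩

/-- Proposition 1(i), case |Q| = |R| = 2: under Assumption 1, no
non-diversified profile is a Nash equilibrium. -/
theorem stmt3 (P1 P2 a1 a2 : ℝ)
    (hP1 : 0 < P1) (hP2 : 0 < P2) (ha1 : 0 < a1) (ha2 : 0 < a2)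
    (hsum : a1 + a2 = 1)
    (hA1 : P1 > min (P2 * a1) (P2 * a2))
    (hA2 : P2 > min (P1 * a1) (P1 * a2)) :
    ¬ IsNash P1 P2 a1 a2 r1 r1 ∧ ¬ IsNash P1 P2 a1 a2 r2 r2 :=
  stmt3_general P1 P2 a1 a2 hA1 hA2
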